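/- arXiv:2305.01714 — 3 statements merged into one kernel-verified Lean document; each statement's English description precedes it below -/
import Mathlib

section
/- Fix a real constant c > e (Euler's number). There exist a constant C > 0 and a threshold N such that for every integer n ≥ N the following holds. Let V and U be finite sets with |V| ≤ n and |U| = ⌈c·n⌉. Choose, uniformly at random and independently for each v ∈ V, a 3-element subset f(v) of U (uniform over all 3-element subsets of U). Then with probability at least 1 − C/n^5 there exists an injective map g : V → U with g(v) ∈ f(v) for every v ∈ V. -/
/-!
If no injection exists, Hall's theorem gives `S ⊆ V` and `T ⊆ U` with `|T| = |S| - 1`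
and `f v ⊆ T` for every `v ∈ S`; as `|f v| = 3`, `|S| = k ≥ 4`. With `m = |V| ≤ n` and
`u = |U| ≥ cn`, a union bound over such pairs bounds the failure probability by
`∑ₖ C(m,k) C(u,k-1) (C(k-1,3) / C(u,3))^k`. Since `C(a,3) / C(b,3) ≤ (a/b)^3` and
`C(n,k) ≤ (en/k)^k`, the `k`-th term is at most
`(e/c)^(2k) (k/n)^(k+1) ≤ (e/c)^(2k) k^5 / n^5`, and `∑ₖ k^5 (e/c)^(2k)` converges
because `c > e`.
-/

open Finset

section Counting

variable {V U : Type*} [Fintype V] [Fintype U] [DecidableEq U] {r : ℕ}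

lemma card_filter_val_subset (T : Finset U) :
    #{s : {s : Finset U // s.card = r} | s.1 ⊆ T} = T.card.choose r := by
  rw [← card_powersetCard r T]
  refine card_bij (fun s _ => s.1) ?_ (fun a _ b _ h => Subtype.ext h) ?_
  · intro s hs
    simpa [mem_powersetCard, s.2] using (mem_filter.mp hs).2
  · intro t ht
    rw [mem_powersetCard] at ht
    exact ⟨⟨t, ht.2⟩, by simp [ht.1], rfl⟩

lemma card_filter_forall_mem_val_subset [DecidableEq V] (S : Finset V) (T : Finset U) :
    #{f : V → {s : Finset U // s.card = r} | ∀ v ∈ S, (f v).1 ⊆ T}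
      = T.card.choose r ^ S.card * (Fintype.card U).choose r ^ (Fintype.card V - S.card) := by
  have hpi : ({f : V → {s : Finset U // s.card = r} | ∀ v ∈ S, (f v).1 ⊆ T} : Finset _)
      = Fintype.piFinset fun v =>
          if v ∈ S then ({s : {s : Finset U // s.card = r} | s.1 ⊆ T} : Finset _)
          else univ := by
    ext f
    simp only [mem_filter, mem_univ, true_and, Fintype.mem_piFinset]
    refine ⟨fun h v => ?_, fun h v hv => by simpa [hv] using h v⟩
    split_ifs with hv <;> simp [h v, hv]
  rw [hpi, Fintype.card_piFinset]
  simp only [apply_ite card]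
  rw [prod_ite, prod_const, prod_const, card_filter_val_subset, card_univ,
    Fintype.card_finset_len, filter_mem_eq_inter, univ_inter, filter_not, filter_mem_eq_inter,
    univ_inter, card_sdiff_of_subset (subset_univ S), card_univ]

lemma exists_forall_subset_of_not_exists_injective (f : V → Finset U)
    (hVU : Fintype.card V ≤ Fintype.card U + 1)
    (hf : ¬ ∃ g : V → U, Function.Injective g ∧ ∀ v, g v ∈ f v) :
    ∃ S : Finset V, ∃ T : Finset U, #T + 1 = #S ∧ ∀ v ∈ S, f v ⊆ T := by
  obtain ⟨S, hS⟩ : ∃ S : Finset V, #(S.biUnion f) < #S := by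
    by_contra! h
    exact hf ((all_card_le_biUnion_card_iff_exists_injective f).mp h)
  have hSV := card_le_univ S
  obtain ⟨T, hNT, -, hT⟩ := exists_subsuperset_card_eq (subset_univ (S.biUnion f))
    (n := #S - 1) (by omega) (by rw [card_univ]; omega)
  exact ⟨S, T, by omega, fun v hv => (subset_biUnion_of_mem f hv).trans hNT⟩

lemma card_filter_not_exists_injective_le [DecidableEq V]
    (hVU : Fintype.card V ≤ Fintype.card U + 1) :
    #{f : V → {s : Finset U // s.card = r} |
        ¬ ∃ g : V → U, Function.Injective g ∧ ∀ v, g v ∈ (f v).1}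
      ≤ ∑ k ∈ Icc (r + 1) (Fintype.card V), (Fintype.card V).choose k *
          ((Fintype.card U).choose (k - 1) *
            ((k - 1).choose r ^ k * (Fintype.card U).choose r ^ (Fintype.card V - k))) := by
  have hsub : ({f : V → {s : Finset U // s.card = r} |
        ¬ ∃ g : V → U, Function.Injective g ∧ ∀ v, g v ∈ (f v).1} : Finset _)
      ⊆ (Icc (r + 1) (Fintype.card V)).biUnion fun k =>
          (powersetCard k univ).biUnion fun S => (powersetCard (k - 1) univ).biUnion fun T =>
            {f : V → {s : Finset U // s.card = r} | ∀ v ∈ S, (f v).1 ⊆ T} := by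
    intro f hf
    obtain ⟨S, T, hST, hT⟩ :=
      exists_forall_subset_of_not_exists_injective (fun v => (f v).1) hVU (mem_filter.mp hf).2
    obtain ⟨v, hv⟩ : S.Nonempty := card_pos.mp (by omega)
    have hrT : r ≤ #T := (f v).2 ▸ card_le_card (hT v hv)
    simp only [mem_biUnion, mem_Icc, mem_powersetCard_univ, mem_filter, mem_univ, true_and]
    exact ⟨#S, ⟨by omega, card_le_univ S⟩, S, rfl, T, by omega, hT⟩
  refine (card_le_card hsub).trans (card_biUnion_le.trans (sum_le_sum fun k _ => ?_))
  calc _ ≤ #(powersetCard k (univ : Finset V)) * (#(powersetCard (k - 1) (univ : Finset U)) *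
          ((k - 1).choose r ^ k * (Fintype.card U).choose r ^ (Fintype.card V - k))) :=
        card_biUnion_le_card_mul _ _ _ fun S hS => card_biUnion_le_card_mul _ _ _ fun T hT => by
          rw [card_filter_forall_mem_val_subset, mem_powersetCard_univ.mp hS,
            mem_powersetCard_univ.mp hT]
    _ = _ := by simp only [card_powersetCard, card_univ]

end Counting

lemma Nat.choose_mul_pow_le_choose_mul_pow {a b : ℕ} (hab : a ≤ b) (r : ℕ) :
    a.choose r * b ^ r ≤ b.choose r * a ^ r := by
  have hdesc : a.descFactorial r * b ^ r ≤ b.descFactorial r * a ^ r := by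
    induction r with
    | zero => simp
    | succ r ih =>
      have hstep : (a - r) * b ≤ (b - r) * a := by
        rw [Nat.sub_mul, Nat.sub_mul, mul_comm b a]
        exact Nat.sub_le_sub_left (Nat.mul_le_mul_left r hab) _
      rw [Nat.descFactorial_succ, Nat.descFactorial_succ, pow_succ, pow_succ]
      calc (a - r) * a.descFactorial r * (b ^ r * b)
          = a.descFactorial r * b ^ r * ((a - r) * b) := by ring
        _ ≤ b.descFactorial r * a ^ r * ((b - r) * a) := Nat.mul_le_mul ih hstep
        _ = (b - r) * b.descFactorial r * (a ^ r * a) := by ring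
  rw [Nat.descFactorial_eq_factorial_mul_choose, Nat.descFactorial_eq_factorial_mul_choose,
    mul_assoc, mul_assoc] at hdesc
  exact Nat.le_of_mul_le_mul_left hdesc (Nat.factorial_pos r)

lemma Nat.choose_le_exp_mul_div_pow (n k : ℕ) :
    (n.choose k : ℝ) ≤ (Real.exp 1 * n / k) ^ k := by
  rcases k.eq_zero_or_pos with rfl | hk
  · simp
  have hfact : (k : ℝ) ^ k ≤ Real.exp 1 ^ k * k.factorial := by
    have := Real.pow_div_factorial_le_exp (k : ℝ) (Nat.cast_nonneg k) k
    rwa [← Real.exp_one_pow, div_le_iff₀ (by positivity)] at this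
  calc (n.choose k : ℝ) ≤ n ^ k / k.factorial := Nat.choose_le_pow_div k n
    _ ≤ (Real.exp 1 * n / k) ^ k := by
      rw [div_pow, mul_pow, div_le_div_iff₀ (by positivity) (by positivity)]
      calc (n : ℝ) ^ k * k ^ k ≤ n ^ k * (Real.exp 1 ^ k * k.factorial) := by gcongr
        _ = _ := by ring

lemma div_pow_mul_div_pow_mul_pow_le {a c x y : ℝ} (ha : 0 < a) (hc : 0 < c) (hac : 1 ≤ a * c)
    (hy : 0 < y) (hyx : y ≤ x / c) (hx : x ≤ 1) (j : ℕ) :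
    (a / x) ^ (j + 4) * (a / y) ^ (j + 3) * y ^ (3 * (j + 4))
      ≤ ((a / c) ^ 2) ^ (j + 4) * x ^ 5 := by
  have hx0 : 0 < x := (div_pos_iff_of_pos_right hc).mp (hy.trans_le hyx)
  calc (a / x) ^ (j + 4) * (a / y) ^ (j + 3) * y ^ (3 * (j + 4))
      = a ^ (2 * j + 7) * y ^ (2 * j + 9) / x ^ (j + 4) := by
        rw [div_pow, div_pow, eq_div_iff (by positivity)]
        field_simp
        ring
    _ ≤ a ^ (2 * j + 7) * (x / c) ^ (2 * j + 9) / x ^ (j + 4) := by gcongr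
    _ = ((a / c) ^ 2) ^ (j + 4) * x ^ 5 * (x ^ j / (a * c)) := by
        rw [div_pow, div_pow, div_pow]
        field_simp
        ring
    _ ≤ ((a / c) ^ 2) ^ (j + 4) * x ^ 5 * 1 := by
        gcongr
        rw [div_le_one (by positivity)]
        exact (pow_le_one₀ hx0.le hx).trans hac
    _ = _ := mul_one _

lemma choose_mul_choose_mul_pow_le {c : ℝ} (hc : 1 ≤ c) {m n u k : ℕ} (hk : 4 ≤ k)
    (hkm : k ≤ m) (hmn : m ≤ n) (hu : c * n ≤ u) :
    (m.choose k * (u.choose (k - 1) * ((k - 1).choose 3 ^ k * u.choose 3 ^ (m - k))) : ℝ)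
      ≤ ((Real.exp 1 / c) ^ 2) ^ k * (k / n) ^ 5 * u.choose 3 ^ m := by
  obtain ⟨j, rfl⟩ : ∃ j, k = j + 4 := ⟨k - 4, by omega⟩
  rw [show j + 4 - 1 = j + 3 by omega]
  have hn : (j + 4 : ℝ) ≤ n := by exact_mod_cast hkm.trans hmn
  have hnu : (n : ℝ) ≤ u := le_trans (le_mul_of_one_le_left (by positivity) hc) hu
  have hu0 : (0 : ℝ) < u := by linarith
  set x : ℝ := (j + 4) / n with hx
  set y : ℝ := (j + 3) / u with hy
  have hchoose3 : ((j + 3).choose 3 : ℝ) ≤ u.choose 3 * y ^ 3 := by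
    have := Nat.choose_mul_pow_le_choose_mul_pow (a := j + 3) (b := u) (by
      exact_mod_cast (by linarith : (j + 3 : ℝ) ≤ u)) 3
    rw [hy, div_pow, mul_div_assoc', le_div_iff₀ (by positivity)]
    exact_mod_cast this
  have hchoosem : (m.choose (j + 4) : ℝ) ≤ (Real.exp 1 / x) ^ (j + 4) := by
    refine (Nat.choose_le_exp_mul_div_pow m (j + 4)).trans ?_
    rw [hx, div_div_eq_mul_div]
    push_cast
    gcongr
  have hchooseu : (u.choose (j + 3) : ℝ) ≤ (Real.exp 1 / y) ^ (j + 3) := by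
    refine (Nat.choose_le_exp_mul_div_pow u (j + 3)).trans_eq ?_
    rw [hy, div_div_eq_mul_div]
    push_cast
    rfl
  have hyx : y ≤ x / c := by
    rw [hx, hy, div_div, mul_comm]
    exact div_le_div₀ (by positivity) (by linarith) (mul_pos (by linarith) (by linarith)) hu
  have hsplit : (u.choose 3 : ℝ) ^ m = u.choose 3 ^ (j + 4) * u.choose 3 ^ (m - (j + 4)) := by
    rw [← pow_add, Nat.add_sub_cancel' hkm]
  calc (m.choose (j + 4) * (u.choose (j + 3) * ((j + 3).choose 3 ^ (j + 4) *
        u.choose 3 ^ (m - (j + 4)))) : ℝ)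
      ≤ (Real.exp 1 / x) ^ (j + 4) * ((Real.exp 1 / y) ^ (j + 3) *
          ((u.choose 3 * y ^ 3) ^ (j + 4) * u.choose 3 ^ (m - (j + 4)))) := by
        gcongr
    _ = (Real.exp 1 / x) ^ (j + 4) * (Real.exp 1 / y) ^ (j + 3) * y ^ (3 * (j + 4)) *
          u.choose 3 ^ m := by
        rw [hsplit, mul_pow, ← pow_mul]
        ring
    _ ≤ ((Real.exp 1 / c) ^ 2) ^ (j + 4) * x ^ 5 * u.choose 3 ^ m := by
        refine mul_le_mul_of_nonneg_right (div_pow_mul_div_pow_mul_pow_le (Real.exp_pos 1)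
          (by positivity) ?_ (by positivity) hyx ?_ j) (by positivity)
        · nlinarith [Real.add_one_le_exp 1]
        · rw [hx, div_le_one (by linarith)]
          exact hn
    _ = _ := by
        rw [hx]
        push_cast
        rfl

lemma sum_Icc_pow_mul_div_pow_le {q : ℝ} (hq0 : 0 ≤ q) (hq1 : q < 1) (a m n : ℕ) :
    ∑ k ∈ Icc a m, q ^ k * ((k : ℝ) / n) ^ 5
      ≤ (∑' k : ℕ, (k : ℝ) ^ 5 * q ^ k) / n ^ 5 := by
  calc ∑ k ∈ Icc a m, q ^ k * ((k : ℝ) / n) ^ 5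
      = (∑ k ∈ Icc a m, (k : ℝ) ^ 5 * q ^ k) / n ^ 5 := by
        rw [sum_div]
        exact sum_congr rfl fun k _ => by ring
    _ ≤ _ := by
        gcongr
        exact Summable.sum_le_tsum _ (fun _ _ => by positivity)
          (summable_pow_mul_geometric_of_norm_lt_one 5 (by rwa [Real.norm_of_nonneg hq0]))

lemma one_sub_le_card_subtype_div_card {α : Type*} [Fintype α] [Nonempty α] (p : α → Prop)
    [DecidablePred p] {ε : ℝ} (h : (#{x | ¬ p x} : ℝ) ≤ ε * Fintype.card α) :
    1 - ε ≤ Nat.card {x // p x} / Fintype.card α := by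
  have hsplit := card_filter_add_card_filter_not (s := univ) p
  rw [card_univ] at hsplit
  rw [Nat.card_eq_fintype_card, Fintype.card_subtype,
    le_div_iff₀ (by exact_mod_cast Fintype.card_pos)]
  have : (#{x | p x} : ℝ) + #{x | ¬ p x} = Fintype.card α := by exact_mod_cast hsplit
  linarith

lemma nonempty_fun_subtype_card_eq {V U : Type*} [Fintype V] [Fintype U] {r : ℕ}
    (h : Fintype.card V ≠ 0 → r ≤ Fintype.card U) :
    Nonempty (V → {s : Finset U // s.card = r}) := by
  by_cases hV : Fintype.card V = 0
  · have := Fintype.card_eq_zero_iff.mp hV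
    infer_instance
  · obtain ⟨s, -, hs⟩ := exists_subset_card_eq (s := (univ : Finset U)) (by simpa using h hV)
    exact ⟨fun _ => ⟨s, hs⟩⟩

lemma exp_one_div_sq_lt_one {c : ℝ} (hc : Real.exp 1 < c) : (Real.exp 1 / c) ^ 2 < 1 := by
  have hc0 : 0 < c := (Real.exp_pos 1).trans hc
  exact pow_lt_one₀ (by positivity) ((div_lt_one hc0).2 hc) two_ne_zero

lemma card_filter_not_exists_injective_le_div_pow {V U : Type*} [Fintype V] [Fintype U]
    [DecidableEq V] [DecidableEq U] {c : ℝ} (hc : Real.exp 1 < c) {n : ℕ}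
    (hV : Fintype.card V ≤ n) (hU : c * n ≤ Fintype.card U) :
    (#{f : V → {s : Finset U // s.card = 3} |
        ¬ ∃ g : V → U, Function.Injective g ∧ ∀ v, g v ∈ (f v).1} : ℝ)
      ≤ (∑' k : ℕ, (k : ℝ) ^ 5 * ((Real.exp 1 / c) ^ 2) ^ k) / n ^ 5 *
          (Fintype.card U).choose 3 ^ Fintype.card V := by
  have hc1 : 1 ≤ c := by linarith [Real.add_one_le_exp 1]
  have hVU : Fintype.card V ≤ Fintype.card U := by
    have : (Fintype.card V : ℝ) ≤ Fintype.card U := by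
      nlinarith [(Nat.cast_le (α := ℝ)).2 hV, (Nat.cast_nonneg n : (0 : ℝ) ≤ n)]
    exact_mod_cast this
  calc _ ≤ ∑ k ∈ Icc 4 (Fintype.card V), ((Fintype.card V).choose k *
          ((Fintype.card U).choose (k - 1) * ((k - 1).choose 3 ^ k *
            (Fintype.card U).choose 3 ^ (Fintype.card V - k))) : ℝ) := by
        exact_mod_cast card_filter_not_exists_injective_le (r := 3) (by omega)
    _ ≤ ∑ k ∈ Icc 4 (Fintype.card V), ((Real.exp 1 / c) ^ 2) ^ k * ((k : ℝ) / n) ^ 5 *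
          ((Fintype.card U).choose 3 : ℝ) ^ Fintype.card V :=
        sum_le_sum fun k hk =>
          choose_mul_choose_mul_pow_le hc1 (mem_Icc.1 hk).1 (mem_Icc.1 hk).2 hV hU
    _ ≤ _ := by
        rw [← sum_mul]
        gcongr
        exact sum_Icc_pow_mul_div_pow_le (by positivity) (exp_one_div_sq_lt_one hc) _ _ _

/-- One-sided random 3-out perfect matching lemma: for a fixed `c > e`, there are
`C > 0` and a threshold `N` such that for all `n ≥ N`, if `|V| ≤ n` and
`|U| = ⌈c·n⌉`, and each `v ∈ V` picks a uniformly random 3-element subset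
`f v ⊆ U` independently, then with probability at least `1 - C/n^5` there is an
injective `g : V → U` with `g v ∈ f v` for all `v`. The probability is expressed
as the fraction of functions `f` admitting such a `g`. -/
theorem stmt_0 (c : ℝ) (hc : Real.exp 1 < c) :
    ∃ C : ℝ, 0 < C ∧ ∃ N : ℕ, ∀ n : ℕ, N ≤ n →
      ∀ (V U : Type) [Fintype V] [Fintype U] [DecidableEq V] [DecidableEq U],
        Fintype.card V ≤ n → Fintype.card U = ⌈c * n⌉₊ →
        1 - C / (n : ℝ) ^ 5 ≤
          (Nat.card {f : V → {s : Finset U // s.card = 3} //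
              ∃ g : V → U, Function.Injective g ∧ ∀ v, g v ∈ (f v).1} : ℝ) /
            (Fintype.card (V → {s : Finset U // s.card = 3}) : ℝ) := by
  have hc0 : 0 < c := (Real.exp_pos 1).trans hc
  set q := (Real.exp 1 / c) ^ 2
  have hsum : Summable fun k : ℕ => (k : ℝ) ^ 5 * q ^ k :=
    summable_pow_mul_geometric_of_norm_lt_one 5
      (by rw [Real.norm_of_nonneg (by positivity)]; exact exp_one_div_sq_lt_one hc)
  -- `N = 0` works: for `n = 0` the type `V` is empty, and `C / 0 ^ 5 = 0`.
  refine ⟨∑' k : ℕ, (k : ℝ) ^ 5 * q ^ k,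
    hsum.tsum_pos (fun _ => by positivity) 1 (by simp [q]; positivity), 0,
    fun n _ V U _ _ _ _ hV hU => ?_⟩
  have hu : c * n ≤ Fintype.card U := hU ▸ Nat.le_ceil _
  have := nonempty_fun_subtype_card_eq (V := V) (U := U) (r := 3) fun hV0 => by
    have hn : (1 : ℝ) ≤ n := Nat.one_le_cast.2 ((Nat.pos_of_ne_zero hV0).trans_le hV)
    have : (2 : ℝ) < Fintype.card U := by nlinarith [Real.exp_one_gt_d9]
    exact_mod_cast this
  refine one_sub_le_card_subtype_div_card _ ?_
  rw [Fintype.card_fun, Fintype.card_finset_len, Nat.cast_pow]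
  exact card_filter_not_exists_injective_le_div_pow hc hV hu
end

section
/- For every real ε > 0 there exists a threshold N such that for all integers n ≥ N and all integers k with 4 ≤ k ≤ n, setting c = (1 + ε)·e, the following inequality of real numbers holds: (n·e/k)^k · (c·n·e/(k−1))^{k−1} · ((k−1)(k−2)(k−3)/(c·n·(c·n−1)·(c·n−2)))^k ≤ ((1 + 0.5·ε)/(1 + ε))^{2k−1} · (k/n)^{k+1}. -/
/-! Write `x = c n` with `c = (1 + ε) e`. Since `k - 1 < n ≤ x`, each of `(k - 2)/(x - 1)` and
`(k - 3)/(x - 2)` is at most `(k - 1)/x`, so the last factor is at most `((k - 1)/x)^(3k)`.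
With that bound the left-hand side collapses to `(k/n)^(k+1) ((k - 1)/((1 + ε) k))^(2k+1) / e²`,
which is at most `(1/(1 + ε))^(2k-1) (k/n)^(k+1)`. The inequality therefore holds for every
`4 ≤ k ≤ n`. -/

lemma sub_div_sub_le_div {a x i : ℝ} (hi : 0 ≤ i) (hax : a ≤ x) (hix : i < x) :
    (a - i) / (x - i) ≤ a / x := by
  rw [div_le_div_iff₀ (by linarith) (by linarith)]
  nlinarith

lemma mul_sub_one_mul_sub_two_div_le {a x : ℝ} (ha : 2 ≤ a) (hax : a < x) :
    a * (a - 1) * (a - 2) / (x * (x - 1) * (x - 2)) ≤ (a / x) ^ 3 := by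
  have h₁ : (a - 1) / (x - 1) ≤ a / x := sub_div_sub_le_div zero_le_one hax.le (by linarith)
  have h₂ : (a - 2) / (x - 2) ≤ a / x := sub_div_sub_le_div zero_le_two hax.le (by linarith)
  have h₀ : 0 ≤ a / x := div_nonneg (by linarith) (by linarith)
  calc a * (a - 1) * (a - 2) / (x * (x - 1) * (x - 2))
      = a / x * ((a - 1) / (x - 1)) * ((a - 2) / (x - 2)) := by
        rw [mul_div_mul_comm, mul_div_mul_comm]
    _ ≤ a / x * (a / x) * (a / x) := by
        gcongr
        exact div_nonneg (by linarith) (by linarith)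
    _ = (a / x) ^ 3 := by ring

lemma three_out_bound_eq {P e n K : ℝ} (j : ℕ) (hP : P ≠ 0) (he : e ≠ 0) (hn : n ≠ 0)
    (hK : K ≠ 0) (hK₁ : K - 1 ≠ 0) :
    (n * e / K) ^ (j + 1) * (P * e * n * e / (K - 1)) ^ j * ((K - 1) / (P * e * n)) ^ (3 * (j + 1))
      = (K / n) ^ (j + 2) * ((K - 1) / (P * K)) ^ (2 * j + 3) / e ^ 2 := by
  generalize K - 1 = L at hK₁ ⊢
  simp only [div_pow, mul_pow, pow_add, pow_mul]
  field_simp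
  ring

lemma three_out_bound {P Q e n K : ℝ} (j : ℕ) (hP : 1 ≤ P) (hQ : 1 ≤ Q) (he : 1 ≤ e)
    (hK : 3 ≤ K) (hKn : K ≤ n) :
    (n * e / K) ^ (j + 1) * (P * e * n * e / (K - 1)) ^ j *
        ((K - 1) * (K - 2) * (K - 3) / (P * e * n * (P * e * n - 1) * (P * e * n - 2))) ^ (j + 1)
      ≤ (Q / P) ^ (2 * j + 1) * (K / n) ^ (j + 2) := by
  have hP₀ : 0 < P := by linarith
  have hn : 0 < n := by linarith
  have hK₁ : 0 < K - 1 := by linarith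
  have hx : n ≤ P * e * n := le_mul_of_one_le_left hn.le (one_le_mul_of_one_le_of_one_le hP he)
  have hfalling : (K - 1) * (K - 2) * (K - 3) / (P * e * n * (P * e * n - 1) * (P * e * n - 2))
      ≤ ((K - 1) / (P * e * n)) ^ 3 := by
    convert mul_sub_one_mul_sub_two_div_le (a := K - 1) (x := P * e * n) (by linarith)
      (by linarith) using 3 <;> ring
  have hfalling₀ :
      0 ≤ (K - 1) * (K - 2) * (K - 3) / (P * e * n * (P * e * n - 1) * (P * e * n - 2)) :=
    div_nonneg (mul_nonneg (mul_nonneg hK₁.le (by linarith)) (by linarith))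
      (mul_nonneg (mul_nonneg (by linarith) (by linarith)) (by linarith))
  have hratio : (K - 1) / (P * K) ≤ 1 / P := by
    rw [div_le_div_iff₀ (by positivity) (by positivity)]
    nlinarith
  calc _ ≤ (n * e / K) ^ (j + 1) * (P * e * n * e / (K - 1)) ^ j *
          ((K - 1) / (P * e * n)) ^ (3 * (j + 1)) := by
        rw [pow_mul]
        gcongr
    _ = (K / n) ^ (j + 2) * ((K - 1) / (P * K)) ^ (2 * j + 3) / e ^ 2 :=
        three_out_bound_eq j (by positivity) (by positivity) (by positivity) (by positivity)
          hK₁.ne'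
    _ ≤ (K / n) ^ (j + 2) * (1 / P) ^ (2 * j + 1) := by
        rw [mul_div_assoc]
        gcongr
        calc ((K - 1) / (P * K)) ^ (2 * j + 3) / e ^ 2 ≤ ((K - 1) / (P * K)) ^ (2 * j + 3) :=
              div_le_self (by positivity) (one_le_pow₀ he)
          _ ≤ (1 / P) ^ (2 * j + 3) := by gcongr
          _ ≤ (1 / P) ^ (2 * j + 1) :=
              pow_le_pow_of_le_one (by positivity) (div_le_one_of_le₀ hP hP₀.le) (by omega)
    _ ≤ (Q / P) ^ (2 * j + 1) * (K / n) ^ (j + 2) := by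
        rw [mul_comm]
        gcongr

/-- The inequality chain from the proof of the 3-out perfect-matching lemma:
for `c = (1+ε)e` and `n` large enough, for all `4 ≤ k ≤ n`,
`(ne/k)^k (cne/(k-1))^{k-1} ((k-1)(k-2)(k-3)/(cn(cn-1)(cn-2)))^k
  ≤ ((1+0.5ε)/(1+ε))^{2k-1} (k/n)^{k+1}`. -/
theorem stmt_3 (ε : ℝ) (hε : 0 < ε) :
    ∃ N : ℕ, ∀ n : ℕ, N ≤ n → ∀ k : ℕ, 4 ≤ k → k ≤ n →
      (let e : ℝ := Real.exp 1
       let c : ℝ := (1 + ε) * e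
       ((n : ℝ) * e / k) ^ k * (c * n * e / ((k : ℝ) - 1)) ^ (k - 1) *
          (((k : ℝ) - 1) * ((k : ℝ) - 2) * ((k : ℝ) - 3) /
              (c * n * (c * n - 1) * (c * n - 2))) ^ k ≤
        ((1 + 0.5 * ε) / (1 + ε)) ^ (2 * k - 1) * ((k : ℝ) / n) ^ (k + 1)) := by
  refine ⟨0, fun n _ k hk hkn => ?_⟩
  obtain ⟨j, rfl⟩ : ∃ j, k = j + 1 := ⟨k - 1, by omega⟩
  rw [Nat.add_sub_cancel, show 2 * (j + 1) - 1 = 2 * j + 1 by omega]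
  exact three_out_bound j (by linarith) (by linarith) (by linarith [Real.add_one_le_exp 1])
    (by exact_mod_cast (by omega : 3 ≤ j + 1)) (by exact_mod_cast hkn)
end

section
/- For every real number q with 0 < q < 1, there exist a constant C > 0 and a threshold N such that for every integer n ≥ N, the sum over integers k from 4 to n of q^{2k−1}·(k/n)^{k+1} is at most C/n^5. -/
/-! For `4 ≤ k ≤ n` we have `(k/n)^(k+1) ≤ (k/n)^5` and `q^(2k-1) ≤ q^k`, so each term is at
most `k^5 q^k / n^5`; the convergent series `∑ k^5 q^k` then serves as the constant. -/

lemma pow_two_mul_sub_one_mul_div_pow_le {q : ℝ} (hq0 : 0 ≤ q) (hq1 : q ≤ 1) {k n : ℕ}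
    (hk : 4 ≤ k) (hkn : k ≤ n) :
    q ^ (2 * k - 1) * ((k : ℝ) / n) ^ (k + 1) ≤ (k : ℝ) ^ 5 * q ^ k / (n : ℝ) ^ 5 := by
  have hn : (0 : ℝ) < n := by exact_mod_cast (show 0 < n by omega)
  have hq_pow : q ^ (2 * k - 1) ≤ q ^ k := pow_le_pow_of_le_one hq0 hq1 (by omega)
  have hkn_pow : ((k : ℝ) / n) ^ (k + 1) ≤ ((k : ℝ) / n) ^ 5 :=
    pow_le_pow_of_le_one (by positivity) ((div_le_one hn).mpr (by exact_mod_cast hkn)) (by omega)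
  calc q ^ (2 * k - 1) * ((k : ℝ) / n) ^ (k + 1) ≤ q ^ k * ((k : ℝ) / n) ^ 5 := by gcongr
    _ = (k : ℝ) ^ 5 * q ^ k / (n : ℝ) ^ 5 := by rw [div_pow]; ring

/-- Summing the per-size failure bounds `q^{2k-1} (k/n)^{k+1}` over `4 ≤ k ≤ n`
gives `O(1/n^5)`. -/
theorem stmt_13 (q : ℝ) (hq0 : 0 < q) (hq1 : q < 1) :
    ∃ C : ℝ, 0 < C ∧ ∃ N : ℕ, ∀ n : ℕ, N ≤ n →
      ∑ k ∈ Finset.Icc 4 n, q ^ (2 * k - 1) * ((k : ℝ) / n) ^ (k + 1) ≤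
        C / (n : ℝ) ^ 5 := by
  have hsum : Summable fun k : ℕ => (k : ℝ) ^ 5 * q ^ k :=
    summable_pow_mul_geometric_of_norm_lt_one 5 (by rwa [Real.norm_of_nonneg hq0.le])
  refine ⟨∑' k : ℕ, (k : ℝ) ^ 5 * q ^ k,
    hsum.tsum_pos (fun k => by positivity) 1 (by simpa using hq0), 0, fun n _ => ?_⟩
  calc ∑ k ∈ Finset.Icc 4 n, q ^ (2 * k - 1) * ((k : ℝ) / n) ^ (k + 1)
      ≤ ∑ k ∈ Finset.Icc 4 n, (k : ℝ) ^ 5 * q ^ k / (n : ℝ) ^ 5 :=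
        Finset.sum_le_sum fun k hk =>
          pow_two_mul_sub_one_mul_div_pow_le hq0.le hq1.le (Finset.mem_Icc.mp hk).1
            (Finset.mem_Icc.mp hk).2
    _ ≤ (∑' k : ℕ, (k : ℝ) ^ 5 * q ^ k) / (n : ℝ) ^ 5 := by
        rw [← Finset.sum_div]
        gcongr
        exact hsum.sum_le_tsum _ fun k _ => by positivity
end
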